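/- Q-relation soundness: Let α be a PDL program, W a collection of saturated sets of formulas, and R_a relations on W for each atomic program a. Then for every pair (X, δ̄) ∈ H_α, the relation Q_X ∘ Q_{δ̄} is included in Q_α, where Q is defined on W by: Q_a = R_a; Q_{τ?} = {(Y,Y) | τ ∈ Y}; Q_{α∪β} = Q_α ∪ Q_β; Q_{α;β} = Q_α ∘ Q_β; Q_{α*} = (Q_α)*; Q_X = Id_W ∩ ⋂_{τ∈X} Q_{τ?}; and Q_{δ̄} is the composition of Q along the program list δ̄ (Id_W for the empty list). -/

import Mathlib

mutual
inductive Formula : Type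
  | bot : Formula
  | atom : ℕ → Formula
  | and : Formula → Formula → Formula
  | neg : Formula → Formula
  | box : Program → Formula → Formula
inductive Program : Type
  | atom : ℕ → Program
  | test : Formula → Program
  | union : Program → Program → Program
  | comp : Program → Program → Program
  | star : Program → Program
end

structure KripkeModel (W : Type) : Type where
  rel : ℕ → W → W → Prop
  val : W → ℕ → Prop

mutual
def evaluate {W : Type} (M : KripkeModel W) : W → Formula → Prop
  | _, .bot => False
  | w, .atom p => M.val w p
  | w, .and φ ψ => evaluate M w φ ∧ evaluate M w ψ
  | w, .neg φ => ¬ evaluate M w φ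
  | w, .box α φ => ∀ v, relate M α w v → evaluate M v φ
def relate {W : Type} (M : KripkeModel W) : Program → W → W → Prop
  | .atom a, w, v => M.rel a w v
  | .test τ, w, v => w = v ∧ evaluate M w τ
  | .union α β, w, v => relate M α w v ∨ relate M β w v
  | .comp α β, w, v => ∃ u, relate M α w u ∧ relate M β u v
  | .star α, w, v => Relation.ReflTransGen (fun x y => relate M α x y) w v
end

/-- Relation interpreting a list of programs: composition, identity for `[]`. -/
def relateSeq {W : Type} (M : KripkeModel W) : List Program → W → W → Prop
  | [], v, w => v = w
  | α :: δ, v, w => ∃ u, relate M α v u ∧ relateSeq M δ u w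

/-- Implication, defined from ¬ and ∧. -/
def Formula.imp (φ ψ : Formula) : Formula := .neg (.and φ (.neg ψ))

/-- Disjunction, defined from ¬ and ∧. -/
def Formula.disj (φ ψ : Formula) : Formula := .neg (.and (.neg φ) (.neg ψ))

def semImplies (φ ψ : Formula) : Prop :=
  ∀ (W : Type) (M : KripkeModel W) (w : W), evaluate M w φ → evaluate M w ψ

def semEquiv (φ ψ : Formula) : Prop :=
  ∀ (W : Type) (M : KripkeModel W) (w : W), evaluate M w φ ↔ evaluate M w ψ

def valid (φ : Formula) : Prop :=
  ∀ (W : Type) (M : KripkeModel W) (w : W), evaluate M w φ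

mutual
/-- Uniform substitution on formulas. -/
def substF (σ : ℕ → Formula) : Formula → Formula
  | .bot => .bot
  | .atom p => σ p
  | .and φ ψ => .and (substF σ φ) (substF σ ψ)
  | .neg φ => .neg (substF σ φ)
  | .box α φ => .box (substP σ α) (substF σ φ)
/-- Uniform substitution on programs. -/
def substP (σ : ℕ → Formula) : Program → Program
  | .atom a => .atom a
  | .test τ => .test (substF σ τ)
  | .union α β => .union (substP σ α) (substP σ β)
  | .comp α β => .comp (substP σ α) (substP σ β)
  | .star α => .star (substP σ α)
end

/-- The substitution ρ/x mapping x to ρ and all other atoms to themselves. -/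
def substOne (x : ℕ) (ρ : Formula) : ℕ → Formula := fun p => if p = x then ρ else .atom p

mutual
/-- Occurrence of an atomic proposition in a formula. -/
def occursF (x : ℕ) : Formula → Prop
  | .bot => False
  | .atom p => p = x
  | .and φ ψ => occursF x φ ∨ occursF x ψ
  | .neg φ => occursF x φ
  | .box α φ => occursP x α ∨ occursF x φ
/-- Occurrence of an atomic proposition in a program (including inside tests). -/
def occursP (x : ℕ) : Program → Prop
  | .atom _ => False
  | .test τ => occursF x τ
  | .union α β => occursP x α ∨ occursP x β
  | .comp α β => occursP x α ∨ occursP x β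
  | .star α => occursP x α
end

mutual
/-- Vocabulary of a formula: atomic propositions (inl) and atomic programs (inr). -/
def vocF : Formula → Set (ℕ ⊕ ℕ)
  | .bot => ∅
  | .atom p => {Sum.inl p}
  | .and φ ψ => vocF φ ∪ vocF ψ
  | .neg φ => vocF φ
  | .box α φ => vocP α ∪ vocF φ
def vocP : Program → Set (ℕ ⊕ ℕ)
  | .atom a => {Sum.inr a}
  | .test τ => vocF τ
  | .union α β => vocP α ∪ vocP β
  | .comp α β => vocP α ∪ vocP β
  | .star α => vocP α
end

/-- Shallow tests of a program. -/
def TestsOf : Program → Set Formula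
  | .atom _ => ∅
  | .test τ => {τ}
  | .union α β => TestsOf α ∪ TestsOf β
  | .comp α β => TestsOf α ∪ TestsOf β
  | .star α => TestsOf α

/-- Shallow subprograms of a program. -/
def ProgsOf : Program → Set Program
  | .atom a => {.atom a}
  | .test τ => {.test τ}
  | .union α β => {.union α β} ∪ ProgsOf α ∪ ProgsOf β
  | .comp α β => {.comp α β} ∪ ProgsOf α ∪ ProgsOf β
  | .star α => {.star α} ∪ ProgsOf α

/-- Iterated boxes: □(δ̄, φ) = [δ₁]…[δₙ]φ. -/
def boxes : List Program → Formula → Formula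
  | [], φ => φ
  | α :: δ, φ => .box α (boxes δ φ)

/-- Test profiles of a program: subsets of its shallow tests. -/
def TP (α : Program) : Set (Set Formula) := {ℓ | ℓ ⊆ TestsOf α}

/-- The sets of program lists P^ℓ. -/
def Pfun (ℓ : Set Formula) : Program → Set (List Program)
  | .atom a => {[.atom a]}
  | .test τ => {l | l = [] ∧ τ ∈ ℓ}
  | .union α β => Pfun ℓ α ∪ Pfun ℓ β
  | .comp α β => {l | ∃ δ ∈ Pfun ℓ α, δ ≠ [] ∧ l = δ ++ [β]} ∪ {l | l ∈ Pfun ℓ β ∧ [] ∈ Pfun ℓ α}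
  | .star α => {[]} ∪ {l | ∃ δ ∈ Pfun ℓ α, δ ≠ [] ∧ l = δ ++ [.star α]}

/-- F^ℓ(α): negations of the failed tests. -/
def Ffun (ℓ : Set Formula) (α : Program) : Set Formula :=
  {φ | ∃ τ, τ ∈ TestsOf α ∧ τ ∉ ℓ ∧ φ = Formula.neg τ}

/-- X^ℓ_{α,ψ}. -/
def Xset (ℓ : Set Formula) (α : Program) (ψ : Formula) : Set Formula :=
  Ffun ℓ α ∪ {φ | ∃ δ ∈ Pfun ℓ α, φ = boxes δ ψ}

/-- unfold_□(α, ψ). -/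
def unfoldBox (α : Program) (ψ : Formula) : Set (Set Formula) :=
  {Γ | ∃ ℓ ∈ TP α, Γ = Xset ℓ α ψ}

/-- The function H for diamond unfolding. -/
def Hfun : Program → Set (Set Formula × List Program)
  | .atom a => {(∅, [.atom a])}
  | .test τ => {({τ}, [])}
  | .union α β => Hfun α ∪ Hfun β
  | .comp α β =>
      {p | (∃ X δ, (X, δ) ∈ Hfun α ∧ δ ≠ [] ∧ p = (X, δ ++ [β])) ∨
           (∃ X Y δ, (X, ([] : List Program)) ∈ Hfun α ∧ (Y, δ) ∈ Hfun β ∧ p = (X ∪ Y, δ))}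
  | .star α =>
      insert (∅, ([] : List Program))
        {p | ∃ X δ, (X, δ) ∈ Hfun α ∧ δ ≠ [] ∧ p = (X, δ ++ [Program.star α])}

/-- unfold_◇(α, ψ). -/
def unfoldDiamond (α : Program) (ψ : Formula) : Set (Set Formula) :=
  {Γ | ∃ p ∈ Hfun α, Γ = p.1 ∪ {Formula.neg (boxes p.2 ψ)}}

/-- Saturated sets of formulas. -/
def Saturated (Y : Set Formula) : Prop :=
  (∀ φ, Formula.neg (.neg φ) ∈ Y → φ ∈ Y) ∧
  (∀ φ ψ, Formula.and φ ψ ∈ Y → φ ∈ Y ∧ ψ ∈ Y) ∧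
  (∀ φ ψ, Formula.neg (.and φ ψ) ∈ Y → Formula.neg φ ∈ Y ∨ Formula.neg ψ ∈ Y) ∧
  (∀ α φ, Formula.box α φ ∈ Y → ∃ Δ ∈ unfoldBox α φ, Δ ⊆ Y) ∧
  (∀ α φ, Formula.neg (.box α φ) ∈ Y → ∃ Δ ∈ unfoldDiamond α φ, Δ ⊆ Y)

/-- Single negation. -/
def snegg : Formula → Formula
  | .neg φ => φ
  | φ => .neg φ

mutual
/-- Subformulas of a formula. -/
def subfF : Formula → Set Formula
  | .bot => {.bot}
  | .atom p => {.atom p}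
  | .and φ ψ => {.and φ ψ} ∪ subfF φ ∪ subfF ψ
  | .neg φ => {.neg φ} ∪ subfF φ
  | .box α φ => {.box α φ} ∪ subfP α ∪ subfF φ
/-- Formulas occurring in a program. -/
def subfP : Program → Set Formula
  | .atom _ => ∅
  | .test τ => subfF τ
  | .union α β => subfP α ∪ subfP β
  | .comp α β => subfP α ∪ subfP β
  | .star α => subfP α
end

/-- Fischer-Ladner closed sets. -/
def FLclosed (S : Set Formula) : Prop :=
  (∀ φ ∈ S, snegg φ ∈ S) ∧
  (∀ φ ∈ S, subfF φ ⊆ S) ∧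
  (∀ α β φ, Formula.box (.union α β) φ ∈ S → Formula.box α φ ∈ S ∧ Formula.box β φ ∈ S) ∧
  (∀ α β φ, Formula.box (.comp α β) φ ∈ S → Formula.box α (.box β φ) ∈ S) ∧
  (∀ α φ, Formula.box (.star α) φ ∈ S → Formula.box α (.box (.star α) φ) ∈ S)

/-- Fischer-Ladner closure: the smallest Fischer-Ladner closed superset. -/
def FL (X : Set Formula) : Set Formula := {φ | ∀ S, X ⊆ S → FLclosed S → φ ∈ S}

mutual
def lenF : Formula → ℕ
  | .bot => 1
  | .atom _ => 1
  | .and φ ψ => 1 + lenF φ + lenF ψ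
  | .neg φ => 1 + lenF φ
  | .box α φ => 1 + lenP α + lenF φ
/-- Length (size) of a program. -/
def lenP : Program → ℕ
  | .atom _ => 1
  | .test τ => 1 + lenF τ
  | .union α β => 1 + lenP α + lenP β
  | .comp α β => 1 + lenP α + lenP β
  | .star α => 1 + lenP α
end

/-- Sum of distances along a list of states (consecutive pairs). -/
noncomputable def listSum {W : Type} (d : W → W → ℕ∞) : List W → ℕ∞
  | [] => 0
  | [_] => 0
  | a :: b :: rest => d a b + listSum d (b :: rest)

open Classical in
/-- The α-distance between states. -/
noncomputable def distance {W : Type} (M : KripkeModel W) : Program → W → W → ℕ∞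
  | .atom a, v, w => if M.rel a v w then 1 else ⊤
  | .test τ, v, w => if v = w ∧ evaluate M v τ then 0 else ⊤
  | .union α β, v, w => min (distance M α v w) (distance M β v w)
  | .comp α β, v, w => ⨅ u, distance M α v u + distance M β u w
  | .star α, v, w =>
      ⨅ (l : List W) (_ : l.head? = some v ∧ l.getLast? = some w),
        listSum (fun x y => distance M α x y) l

open Classical in
/-- Distance along a list of programs. -/
noncomputable def distanceSeq {W : Type} (M : KripkeModel W) : List Program → W → W → ℕ∞
  | [], v, w => if v = w then 0 else ⊤
  | α :: δ, v, w => ⨅ u, distance M α v u + distanceSeq M δ u w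

/-- The relation Q_α on a type of "states" S carrying formula membership `mem`. -/
def Qprog {S : Type} (mem : Formula → S → Prop) (R : ℕ → S → S → Prop) : Program → S → S → Prop
  | .atom a => R a
  | .test τ => fun X Y => X = Y ∧ mem τ X
  | .union α β => fun X Y => Qprog mem R α X Y ∨ Qprog mem R β X Y
  | .comp α β => fun X Y => ∃ U, Qprog mem R α X U ∧ Qprog mem R β U Y
  | .star α => Relation.ReflTransGen (fun X Y => Qprog mem R α X Y)

/-- Q along a list of programs, with Id_W (restricted identity) for the empty list. -/
def Qseq {S : Type} (mem : Formula → S → Prop) (R : ℕ → S → S → Prop) (Wset : Set S) :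
    List Program → S → S → Prop
  | [] => fun Y Z => Y = Z ∧ Y ∈ Wset
  | α :: δ => fun Y Z => ∃ U, Qprog mem R α Y U ∧ Qseq mem R Wset δ U Z

/-- A model graph: a Kripke model whose states are locally consistent saturated sets. -/
structure ModelGraph (Wset : Set (Set Formula)) : Type where
  R : ℕ → ↥Wset → ↥Wset → Prop
  saturated : ∀ X : ↥Wset, Saturated X.val
  noBot : ∀ X : ↥Wset, Formula.bot ∉ X.val
  consistent : ∀ (X : ↥Wset) (p : ℕ),
    Formula.atom p ∈ X.val → Formula.neg (Formula.atom p) ∉ X.val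
  boxCond : ∀ (X Y : ↥Wset) (a : ℕ) (φ : Formula),
    R a X Y → Formula.box (.atom a) φ ∈ X.val → φ ∈ Y.val
  diaCond : ∀ (X : ↥Wset) (α : Program) (φ : Formula),
    Formula.neg (.box α φ) ∈ X.val →
      ∃ Y : ↥Wset, Qprog (fun τ Z => τ ∈ Z.val) R α X Y ∧ Formula.neg φ ∈ Y.val

/-- The Kripke model of a model graph; valuation: p holds at X iff p ∈ X. -/
def mgModel {Wset : Set (Set Formula)} (G : ModelGraph Wset) : KripkeModel ↥Wset :=
  ⟨G.R, fun X p => Formula.atom p ∈ X.val⟩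

/-! Induction on `α`. For `(X, δ̄β) ∈ H_{α;β}` (and likewise for `α*`) a Q-path along `δ̄β`
splits into a path along `δ̄`, which by induction lies in `Q_α`, followed by a `Q_β`-step. -/

/-- `Qseq` without the restriction of the empty composition to `W`. -/
def Qchain {S : Type} (mem : Formula → S → Prop) (R : ℕ → S → S → Prop) :
    List Program → S → S → Prop
  | [] => Eq
  | α :: δ => fun Y Z => ∃ U, Qprog mem R α Y U ∧ Qchain mem R δ U Z

section

variable {S : Type} {mem : Formula → S → Prop} {R : ℕ → S → S → Prop}

theorem Qchain_of_Qseq {Wset : Set S} :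
    ∀ {δ : List Program} {Y Z : S}, Qseq mem R Wset δ Y Z → Qchain mem R δ Y Z
  | [], _, _, h => h.1
  | _ :: _, _, _, ⟨U, hU, h⟩ => ⟨U, hU, Qchain_of_Qseq h⟩

theorem Qchain_append_singleton : ∀ {δ : List Program} {β : Program} {Y Z : S},
    Qchain mem R (δ ++ [β]) Y Z → ∃ U, Qchain mem R δ Y U ∧ Qprog mem R β U Z
  | [], _, Y, _, ⟨_, hβ, rfl⟩ => ⟨Y, rfl, hβ⟩
  | _ :: _, _, _, _, ⟨U, hα, h⟩ =>
    let ⟨V, hδ, hβ⟩ := Qchain_append_singleton h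
    ⟨V, ⟨U, hα, hδ⟩, hβ⟩

theorem Qprog_of_mem_Hfun : ∀ (α : Program) {p : Set Formula × List Program}, p ∈ Hfun α →
    ∀ {Y Z : S}, (∀ τ ∈ p.1, mem τ Y) → Qchain mem R p.2 Y Z → Qprog mem R α Y Z
  | .atom _, _, rfl, _, _, _, ⟨_, h, rfl⟩ => h
  | .test τ, _, rfl, _, _, hX, rfl => ⟨rfl, hX τ rfl⟩
  | .union α _, _, .inl hp, _, _, hX, h => .inl (Qprog_of_mem_Hfun α hp hX h)
  | .union _ β, _, .inr hp, _, _, hX, h => .inr (Qprog_of_mem_Hfun β hp hX h)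
  | .comp α _, _, .inl ⟨_, _, hp, _, rfl⟩, _, _, hX, h =>
    let ⟨U, hδ, hβ⟩ := Qchain_append_singleton h
    ⟨U, Qprog_of_mem_Hfun α hp hX hδ, hβ⟩
  | .comp α β, _, .inr ⟨_, _, _, hp, hq, rfl⟩, Y, _, hX, h =>
    ⟨Y, Qprog_of_mem_Hfun α hp (fun τ hτ => hX τ (.inl hτ)) rfl,
      Qprog_of_mem_Hfun β hq (fun τ hτ => hX τ (.inr hτ)) h⟩
  | .star _, _, .inl rfl, _, _, _, rfl => .refl
  | .star α, _, .inr ⟨_, _, hp, _, rfl⟩, _, _, hX, h =>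
    let ⟨_, hδ, hstar⟩ := Qchain_append_singleton h
    .head (Qprog_of_mem_Hfun α hp hX hδ) hstar

end

/-- Q-relation soundness. -/
theorem cpHelpA (Wset : Set (Set Formula)) (hW : ∀ Y ∈ Wset, Saturated Y)
    (R : ℕ → Set Formula → Set Formula → Prop) (α : Program) :
    ∀ p ∈ Hfun α, ∀ Y Z : Set Formula,
      (Y ∈ Wset ∧ (∀ τ ∈ p.1, τ ∈ Y) ∧
        Qseq (fun τ X => τ ∈ X) R Wset p.2 Y Z) →
      Qprog (fun τ X => τ ∈ X) R α Y Z := by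
  rintro p hp Y Z ⟨-, hX, h⟩
  exact Qprog_of_mem_Hfun α hp hX (Qchain_of_Qseq h)
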